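/- arXiv:1209.1618 — 2 statements merged into one kernel-verified Lean document; each statement's English description precedes it below -/
import Mathlib

section
/- Let t be an irrational real number and p a prime. Then there are infinitely many rational numbers q such that, writing q = m/n in lowest terms with n ≥ 1, p does not divide m and |t − m/n| < 1/n². Equivalently, the set of rationals q with p ∤ (numerator of q) and |t − q| < 1/(denominator of q)² is infinite. -/
open GenContFract
open GenContFract (of)

/-- For an irrational number `t` and a prime `p`, there are infinitely many
rationals `q = m/n` (in lowest terms, `n ≥ 1`) with `p ∤ m` and `|t - m/n| < 1/n²`. -/
theorem infinite_good_approximations_with_numerator_not_divisible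
    (t : ℝ) (ht : Irrational t) (p : ℕ) (hp : p.Prime) :
    {q : ℚ | ¬ (p : ℤ) ∣ q.num ∧ |t - (q : ℝ)| < 1 / (q.den : ℝ) ^ 2}.Infinite := by
  -- the continued fraction of `t` never terminates
  have hnt : ∀ n, ¬ (of t).TerminatedAt n := by
    intro n h
    obtain ⟨q, hq⟩ := (terminates_iff_rat t).mp ⟨n, h⟩
    exact ht ⟨q, hq.symm⟩
  have hs : ∀ n, ∃ gp : Pair ℝ, (of t).s.get? n = some gp := fun n =>
    Option.ne_none_iff_exists'.1 (hnt n)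
  -- the continuants are integers
  have key : ∀ n, (∃ a b : ℤ, (of t).contsAux n = ⟨(a : ℝ), (b : ℝ)⟩) ∧
      (∃ a b : ℤ, (of t).contsAux (n + 1) = ⟨(a : ℝ), (b : ℝ)⟩) := by
    intro n
    induction n with
    | zero =>
      refine ⟨⟨1, 0, ?_⟩, ⟨⌊t⌋, 1, ?_⟩⟩
      · rw [zeroth_contAux_eq_one_zero]; norm_num
      · rw [first_contAux_eq_h_one, of_h_eq_floor]; norm_num
    | succ n ih =>
      refine ⟨ih.2, ?_⟩
      obtain ⟨a, b, hab⟩ := ih.1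
      obtain ⟨a', b', hab'⟩ := ih.2
      obtain ⟨gp, hgp⟩ := hs n
      obtain ⟨hgpa, z, hgpb⟩ := of_partNum_eq_one_and_exists_int_partDen_eq hgp
      refine ⟨z * a' + a, z * b' + b, ?_⟩
      rw [contsAux_recurrence hgp hab hab', hgpa, hgpb]
      simp only [Pair.mk.injEq]
      constructor <;> push_cast <;> ring
  choose A B hAB using fun n => (key n).2
  have hnum : ∀ n, (of t).nums n = (A n : ℝ) := fun n => by
    rw [num_eq_conts_a, nth_cont_eq_succ_nth_contAux, hAB n]
  have hden : ∀ n, (of t).dens n = (B n : ℝ) := fun n => by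
    rw [den_eq_conts_b, nth_cont_eq_succ_nth_contAux, hAB n]
  have hfib : ∀ n, (Nat.fib (n + 1) : ℝ) ≤ (B n : ℝ) := fun n => by
    rw [← hden n]; exact succ_nth_fib_le_of_nth_den (Or.inr (hnt _))
  have hB1 : ∀ n, 1 ≤ B n := by
    intro n
    have h1 : (1 : ℝ) ≤ (B n : ℝ) :=
      le_trans (by exact_mod_cast Nat.fib_pos.mpr n.succ_pos) (hfib n)
    exact_mod_cast h1
  have hBpos : ∀ n, (0 : ℤ) < B n := fun n => lt_of_lt_of_le one_pos (hB1 n)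
  -- determinant formula
  have hdet : ∀ n, A n * B (n + 1) - B n * A (n + 1) = (-1 : ℤ) ^ (n + 1) := by
    intro n
    have h := SimpContFract.determinant (s := SimpContFract.of t) (n := n)
      (hnt n)
    have h' : ((of t).contsAux (n + 1)).a * ((of t).contsAux (n + 2)).b -
        ((of t).contsAux (n + 1)).b * ((of t).contsAux (n + 2)).a = (-1 : ℝ) ^ (n + 1) := h
    rw [hAB n, hAB (n + 1)] at h'
    dsimp only at h'
    exact_mod_cast h'
  have hcopAB : ∀ n, IsCoprime (A n) (B n) := by
    intro n
    rcases Nat.even_or_odd (n + 1) with he | ho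
    · have h := hdet n; rw [he.neg_one_pow] at h
      exact ⟨B (n + 1), -(A (n + 1)), by linear_combination h⟩
    · have h := hdet n; rw [ho.neg_one_pow] at h
      exact ⟨-(B (n + 1)), A (n + 1), by linear_combination -h⟩
  have hcopAA : ∀ n, IsCoprime (A n) (A (n + 1)) := by
    intro n
    rcases Nat.even_or_odd (n + 1) with he | ho
    · have h := hdet n; rw [he.neg_one_pow] at h
      exact ⟨B (n + 1), -(B n), by linear_combination h⟩
    · have h := hdet n; rw [ho.neg_one_pow] at h
      exact ⟨-(B (n + 1)), B n, by linear_combination -h⟩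
  have hcopNat : ∀ n, Nat.Coprime (A n).natAbs (B n).natAbs := fun n =>
    Int.isCoprime_iff_gcd_eq_one.mp (hcopAB n)
  -- the convergents as rationals
  set q : ℕ → ℚ := fun n => (A n : ℚ) / (B n : ℚ) with hq
  have hqnum : ∀ n, (q n).num = A n := fun n =>
    Rat.num_div_eq_of_coprime (hBpos n) (hcopNat n)
  have hqden : ∀ n, ((q n).den : ℤ) = B n := fun n =>
    Rat.den_div_eq_of_coprime (hBpos n) (hcopNat n)
  have hqcast : ∀ n, ((q n : ℚ) : ℝ) = (of t).convs n := by
    intro n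
    rw [conv_eq_num_div_den, hnum, hden, hq]
    push_cast
    ring
  -- error bound
  have herr : ∀ n, |t - (q n : ℝ)| < 1 / (B n : ℝ) ^ 2 := by
    intro n
    have hBr : (0 : ℝ) < (B n : ℝ) := by exact_mod_cast hBpos n
    have hBr' : (0 : ℝ) < (B (n + 1) : ℝ) := by exact_mod_cast hBpos (n + 1)
    have h1 : |t - (q n : ℝ)| ≤ 1 / ((B n : ℝ) * (B (n + 1) : ℝ)) := by
      rw [hqcast n, ← hden n, ← hden (n + 1)]
      exact abs_sub_convs_le (hnt n)
    have hmono : (B n : ℝ) ≤ (B (n + 1) : ℝ) := by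
      rw [← hden, ← hden]; exact of_den_mono
    have h2 : 1 / ((B n : ℝ) * (B (n + 1) : ℝ)) ≤ 1 / (B n : ℝ) ^ 2 := by
      apply one_div_le_one_div_of_le (by positivity)
      rw [sq]
      exact mul_le_mul_of_nonneg_left hmono hBr.le
    refine lt_of_le_of_ne (h1.trans h2) ?_
    intro heq
    rcases abs_cases (t - (q n : ℝ)) with ⟨h3, -⟩ | ⟨h3, -⟩
    · refine ht ⟨q n + 1 / (B n : ℚ) ^ 2, ?_⟩
      push_cast
      rw [heq] at h3
      linarith
    · refine ht ⟨q n - 1 / (B n : ℚ) ^ 2, ?_⟩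
      push_cast
      rw [heq] at h3
      linarith
  -- membership in the target set
  have hmem : ∀ n, ¬ (p : ℤ) ∣ A n →
      q n ∈ {q : ℚ | ¬ (p : ℤ) ∣ q.num ∧ |t - (q : ℝ)| < 1 / (q.den : ℝ) ^ 2} := by
    intro n hpn
    have hd : ((q n).den : ℝ) = (B n : ℝ) := by exact_mod_cast hqden n
    refine ⟨by rwa [hqnum n], ?_⟩
    rw [hd]
    exact herr n
  -- there are good indices beyond any bound
  have hgood : ∀ n, ∃ m, n ≤ m ∧ ¬ (p : ℤ) ∣ A m := by
    intro n
    by_cases h : (p : ℤ) ∣ A n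
    · refine ⟨n + 1, Nat.le_succ n, fun h' => ?_⟩
      have hu := (hcopAA n).isUnit_of_dvd' h h'
      rw [Int.isUnit_iff] at hu
      have h2 := hp.two_le
      rcases hu with h1 | h1 <;> omega
    · exact ⟨n, le_refl n, h⟩
  -- conclude
  intro hfin
  obtain ⟨m0, -, hm0⟩ := hgood 0
  have hne : Set.Nonempty _ := ⟨q m0, hmem m0 hm0⟩
  obtain ⟨r, hrS, hrmin⟩ := Set.exists_min_image _ (fun x : ℚ => |t - (x : ℝ)|) hfin hne
  have hδ : 0 < |t - (r : ℝ)| := by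
    rw [abs_pos, sub_ne_zero]
    intro h
    exact ht ⟨r, h.symm⟩
  obtain ⟨N, hN⟩ := exists_nat_gt (1 / |t - (r : ℝ)|)
  have hNpos : (0 : ℝ) < N := lt_trans (by positivity) hN
  obtain ⟨m, hm, hpm⟩ := hgood (max N 5)
  have h5 : 5 ≤ m := le_trans (le_max_right _ _) hm
  have hmfib : m ≤ Nat.fib (m + 1) := le_trans (Nat.le_fib_self h5) Nat.fib_le_fib_succ
  have hBm : (N : ℝ) ≤ (B m : ℝ) := by
    calc (N : ℝ) ≤ m := by exact_mod_cast le_trans (le_max_left N 5) hm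
    _ ≤ Nat.fib (m + 1) := by exact_mod_cast hmfib
    _ ≤ (B m : ℝ) := hfib m
  have hBm1 : (1 : ℝ) ≤ (B m : ℝ) := by exact_mod_cast hB1 m
  have h1 : |t - (q m : ℝ)| < 1 / (B m : ℝ) ^ 2 := herr m
  have h2 : 1 / (B m : ℝ) ^ 2 ≤ 1 / (B m : ℝ) := by
    apply one_div_le_one_div_of_le (by linarith)
    nlinarith
  have h3 : 1 / (B m : ℝ) ≤ 1 / (N : ℝ) := one_div_le_one_div_of_le hNpos hBm
  have h4 : 1 / (N : ℝ) < |t - (r : ℝ)| := by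
    rw [div_lt_iff₀ hNpos]
    have := (div_lt_iff₀ hδ).mp hN
    linarith [mul_comm (|t - (r : ℝ)|) (N : ℝ)]
  have h5' : |t - (r : ℝ)| ≤ |t - (q m : ℝ)| := hrmin _ (hmem m hpm)
  linarith
end

section
/- Let T be an infinite compact Hausdorff space and h : T → T a minimal homeomorphism. Then for every N ∈ ℕ there exists a nonempty open set U ⊆ T such that the sets U, h(U), h²(U), …, h^N(U) are pairwise disjoint. (Equivalently, there is a closed set Z with nonempty interior whose first return time under h is greater than N.) -/
/-- For a minimal homeomorphism `h` of an infinite compact Hausdorff space and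
any `N`, there is a nonempty open set `U` such that `U, h(U), …, h^N(U)` are pairwise
disjoint. -/
theorem exists_open_with_disjoint_iterates {T : Type*} [TopologicalSpace T] [CompactSpace T]
    [T2Space T] [Infinite T] (h : T ≃ₜ T)
    (hmin : ∀ S : Set T, IsClosed S → (⇑h) '' S = S → S = ∅ ∨ S = Set.univ) :
    ∀ N : ℕ, ∃ U : Set T, IsOpen U ∧ U.Nonempty ∧
      ∀ i j, i ≤ N → j ≤ N → i ≠ j → Disjoint ((⇑h)^[i] '' U) ((⇑h)^[j] '' U) := by
  -- Step 1: no periodic points.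
  have hper : ∀ (y : T) (n : ℕ), 0 < n → (⇑h)^[n] y ≠ y := by
    intro y n hn hfix
    set S : Set T := (fun k : ℕ => (⇑h)^[k] y) '' Set.Iio n with hS
    have hfin : S.Finite := (Set.finite_Iio n).image _
    have hclosed : IsClosed S := hfin.isClosed
    have hstep : ∀ m : ℕ, 0 < m → h ((⇑h)^[m - 1] y) = (⇑h)^[m] y := by
      intro m hm
      conv_rhs => rw [show m = (m - 1) + 1 from (Nat.succ_pred_eq_of_pos hm).symm]
      rw [Function.iterate_succ_apply']
    have himg : (⇑h) '' S = S := by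
      ext z
      simp only [hS, Set.mem_image, Set.mem_Iio]
      constructor
      · rintro ⟨w, ⟨k, hk, rfl⟩, rfl⟩
        rcases eq_or_lt_of_le (Nat.succ_le_of_lt hk) with he | hlt
        · refine ⟨0, hn, ?_⟩
          have : h ((⇑h)^[k] y) = (⇑h)^[n] y := by
            rw [← he]; exact (Function.iterate_succ_apply' (⇑h) k y).symm
          simp [this, hfix]
        · exact ⟨k + 1, hlt, Function.iterate_succ_apply' (⇑h) k y⟩
      · rintro ⟨k, hk, rfl⟩
        rcases Nat.eq_zero_or_pos k with rfl | hkpos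
        · refine ⟨(⇑h)^[n - 1] y, ⟨n - 1, Nat.sub_lt hn one_pos, rfl⟩, ?_⟩
          simp [hstep n hn, hfix]
        · exact ⟨(⇑h)^[k - 1] y, ⟨k - 1, lt_trans (Nat.sub_lt hkpos one_pos) hk, rfl⟩,
            hstep k hkpos⟩
    rcases hmin S hclosed himg with he | hu
    · have : y ∈ S := ⟨0, hn, rfl⟩
      rw [he] at this; exact this
    · have : Set.Finite (Set.univ : Set T) := hu ▸ hfin
      exact Set.infinite_univ this
  intro N
  obtain ⟨x⟩ := (inferInstance : Nonempty T)
  -- iterates of x are distinct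
  have hinj : ∀ i j : ℕ, i ≠ j → (⇑h)^[i] x ≠ (⇑h)^[j] x := by
    have key : ∀ i j : ℕ, i < j → (⇑h)^[i] x ≠ (⇑h)^[j] x := by
      intro i j hij heq
      have : (⇑h)^[j - i] ((⇑h)^[i] x) = (⇑h)^[i] x := by
        rw [← Function.iterate_add_apply, Nat.sub_add_cancel hij.le, heq]
      exact hper _ _ (Nat.sub_pos_of_lt hij) this
    intro i j hij
    rcases lt_or_gt_of_ne hij with hlt | hgt
    · exact key i j hlt
    · exact fun e => key j i hgt e.symm
  -- separate the points h^[i] x, i ≤ N, by disjoint open sets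
  have hfin : ((fun i : ℕ => (⇑h)^[i] x) '' Set.Iic N).Finite := (Set.finite_Iic N).image _
  obtain ⟨V, hV, hVdisj⟩ := hfin.t2_separation
  -- the open set
  set U : Set T := ⋂ i ∈ Finset.range (N + 1), (⇑h)^[i] ⁻¹' V ((⇑h)^[i] x) with hU
  have hcont : ∀ i : ℕ, Continuous ((⇑h)^[i]) := fun i => h.continuous.iterate i
  refine ⟨U, ?_, ⟨x, ?_⟩, ?_⟩
  · exact isOpen_biInter_finset fun i _ => (hV _).2.preimage (hcont i)
  · simp only [hU, Set.mem_iInter]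
    intro i _
    exact (hV ((⇑h)^[i] x)).1
  · intro i j hi hj hij
    have hsub : ∀ k, k ≤ N → (⇑h)^[k] '' U ⊆ V ((⇑h)^[k] x) := by
      intro k hk
      rintro _ ⟨u, hu, rfl⟩
      have : u ∈ (⇑h)^[k] ⁻¹' V ((⇑h)^[k] x) := by
        simp only [hU, Set.mem_iInter] at hu
        exact hu k (Finset.mem_range.mpr (Nat.lt_succ_of_le hk))
      exact this
    have hmem_i : (⇑h)^[i] x ∈ (fun i : ℕ => (⇑h)^[i] x) '' Set.Iic N := ⟨i, hi, rfl⟩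
    have hmem_j : (⇑h)^[j] x ∈ (fun i : ℕ => (⇑h)^[i] x) '' Set.Iic N := ⟨j, hj, rfl⟩
    have hdisj : Disjoint (V ((⇑h)^[i] x)) (V ((⇑h)^[j] x)) :=
      hVdisj hmem_i hmem_j (hinj i j hij)
    exact hdisj.mono (hsub i hi) (hsub j hj)
end
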